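/- Let N ≥ 2 and identify computational basis states with functions x : Fin N → Bool. For f : (Fin N → Bool) → ℂ define (Xf)(x) = Σ_{i : Fin N} f(flip_i x). Let f and g satisfy Σ_x |f(x)|² = Σ_x |g(x)|² = 1, with f supported on strings of even Hamming weight and g supported on strings of odd Hamming weight. Let S_f = −Σ_x |f(x)|² log₂ |f(x)|² and S_g = −Σ_x |g(x)|² log₂ |g(x)|². Then for every p ∈ [0, 1/2] such that N·H(p) ≥ (S_f + S_g)/2 + 1, where H(p) = −p log₂ p − (1−p) log₂(1−p), one has Re ⟨g, Xf⟩ ≤ 2N√(p(1−p)). -/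

import Mathlib

/-- Flip the `i`-th bit of a computational basis state. -/
def flipBit {N : ℕ} (i : Fin N) (x : Fin N → Bool) : Fin N → Bool :=
  Function.update x i (!(x i))

/-- The transverse-field operator `X`: `(Xf)(x) = Σ_i f(flip_i x)`. -/
noncomputable def transX {N : ℕ} (f : (Fin N → Bool) → ℂ) : (Fin N → Bool) → ℂ :=
  fun x => ∑ i, f (flipBit i x)

/-- The Hamming weight of a bit string. -/
def hammingWt {N : ℕ} (x : Fin N → Bool) : ℕ :=
  (Finset.univ.filter fun i => x i = true).card

/-- The binary entropy function in bits. -/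
noncomputable def binEnt (p : ℝ) : ℝ :=
  -p * Real.logb 2 p - (1 - p) * Real.logb 2 (1 - p)


section AuxProof
open Real Set



lemma logsum2 (x1 x2 s1 s2 : ℝ) (h1 : 0 ≤ x1) (h2 : 0 ≤ x2) (hs1 : x1 ≤ s1) (hs2 : x2 ≤ s2) :
    x1 * Real.log s1 + x2 * Real.log s2 - (x1 + x2) * Real.log (s1 + s2)
      ≤ x1 * Real.log x1 + x2 * Real.log x2 - (x1 + x2) * Real.log (x1 + x2) := by
  rcases eq_or_lt_of_le h1 with rfl | hx1
  · rcases eq_or_lt_of_le h2 with rfl | hx2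
    · simp
    · have hs2' : 0 < s2 := lt_of_lt_of_le hx2 hs2
      have : Real.log s2 ≤ Real.log (s1 + s2) :=
        Real.log_le_log hs2' (by linarith)
      simp only [zero_mul, zero_add, zero_mul]
      nlinarith [this]
  · rcases eq_or_lt_of_le h2 with rfl | hx2
    · have hs1' : 0 < s1 := lt_of_lt_of_le hx1 hs1
      have : Real.log s1 ≤ Real.log (s1 + s2) :=
        Real.log_le_log hs1' (by linarith)
      simp only [zero_mul, add_zero, zero_mul]
      nlinarith [this]
    · -- both positive
      have hs1' : 0 < s1 := lt_of_lt_of_le hx1 hs1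
      have hs2' : 0 < s2 := lt_of_lt_of_le hx2 hs2
      have hX : 0 < x1 + x2 := by linarith
      have hS : 0 < s1 + s2 := by linarith
      have key : ∀ a s : ℝ, 0 < a → 0 < s →
          a * Real.log s - a * Real.log a ≤ a * (s * (x1+x2) / (a * (s1+s2))) - a *
            Real.log ((x1+x2)/(s1+s2)) - a := by
        intro a s ha hs
        have h3 : 0 < s * (x1+x2) / (a * (s1+s2)) := by positivity
        have := Real.log_le_sub_one_of_pos h3
        have hlog : Real.log (s * (x1+x2) / (a * (s1+s2)))
            = Real.log s + Real.log (x1+x2) - Real.log a - Real.log (s1+s2) := by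
          rw [Real.log_div (by positivity) (by positivity), Real.log_mul (ne_of_gt hs)
            (ne_of_gt hX), Real.log_mul (ne_of_gt ha) (ne_of_gt hS)]
          ring
        have hlog2 : Real.log ((x1+x2)/(s1+s2)) = Real.log (x1+x2) - Real.log (s1+s2) :=
          Real.log_div (ne_of_gt hX) (ne_of_gt hS)
        rw [hlog] at this
        rw [hlog2]
        nlinarith [this, ha.le]
      have k1 := key x1 s1 hx1 hs1'
      have k2 := key x2 s2 hx2 hs2'
      have e1 : x1 * (s1 * (x1+x2) / (x1 * (s1+s2))) = s1 * (x1+x2) / (s1+s2) := by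
        field_simp
      have e2 : x2 * (s2 * (x1+x2) / (x2 * (s1+s2))) = s2 * (x1+x2) / (s1+s2) := by
        field_simp
      rw [e1] at k1; rw [e2] at k2
      have hsum : s1 * (x1+x2) / (s1+s2) + s2 * (x1+x2) / (s1+s2) = x1 + x2 := by
        field_simp
      have hlog2 : Real.log ((x1+x2)/(s1+s2)) = Real.log (x1+x2) - Real.log (s1+s2) :=
          Real.log_div (ne_of_gt hX) (ne_of_gt hS)
      rw [hlog2] at k1 k2
      nlinarith [k1, k2]

noncomputable def kap (x y : ℝ) : ℝ :=
  Real.negMulLog x + Real.negMulLog y - Real.negMulLog (x + y)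

lemma kap_superadd {x1 y1 x2 y2 : ℝ} (hx1 : 0 ≤ x1) (hy1 : 0 ≤ y1) (hx2 : 0 ≤ x2)
    (hy2 : 0 ≤ y2) : kap x1 y1 + kap x2 y2 ≤ kap (x1 + x2) (y1 + y2) := by
  have hx := logsum2 x1 x2 (x1+y1) (x2+y2) hx1 hx2 (by linarith) (by linarith)
  have hy := logsum2 y1 y2 (x1+y1) (x2+y2) hy1 hy2 (by linarith) (by linarith)
  simp only [kap, Real.negMulLog]
  have : x1 + x2 + (y1 + y2) = (x1 + y1) + (x2 + y2) := by ring
  rw [this]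
  nlinarith [hx, hy]




lemma flipBit_invol {N : ℕ} (i : Fin N) : Function.Involutive (flipBit i) := by
  intro x
  funext j
  rcases eq_or_ne j i with rfl | h
  · simp [flipBit]
  · simp [flipBit, Function.update_of_ne h]

lemma sum_flip {N : ℕ} (i : Fin N) (F : (Fin N → Bool) → ℝ) :
    ∑ x, F (flipBit i x) = ∑ x, F x :=
  Fintype.sum_bijective _ (flipBit_invol i).bijective _ _ (fun _ => rfl)

lemma sum_cons {n : ℕ} (F : (Fin (n+1) → Bool) → ℝ) :
    ∑ x, F x = ∑ y : Fin n → Bool, F (Fin.cons false y) + ∑ y : Fin n → Bool, F (Fin.cons true y) := by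
  have e : ∑ x : Fin (n+1) → Bool, F x
      = ∑ z : Bool × (Fin n → Bool), F (Fin.cons z.1 z.2) :=
    (Fintype.sum_equiv (Fin.consEquiv fun _ => Bool) _ _ (fun z => rfl)).symm
  rw [e, Fintype.sum_prod_type, Fintype.sum_bool]
  ring

lemma flip_cons_zero {n : ℕ} (b : Bool) (y : Fin n → Bool) :
    flipBit 0 (Fin.cons b y) = Fin.cons (!b) y := by
  simp [flipBit, Fin.update_cons_zero]

lemma flip_cons_succ {n : ℕ} (i : Fin n) (b : Bool) (y : Fin n → Bool) :
    flipBit i.succ (Fin.cons b y) = Fin.cons b (flipBit i y) := by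
  simp only [flipBit, Fin.cons_succ, Fin.cons_update]


lemma han : ∀ (n : ℕ) (D : (Fin n → Bool) → ℝ), (∀ x, 0 ≤ D x) → (∑ x, D x ≤ 1) →
    ∑ i, ∑ x, (Real.negMulLog (D x) - 2⁻¹ * Real.negMulLog (D x + D (flipBit i x)))
      ≤ ∑ x, Real.negMulLog (D x) := by
  intro n
  induction n with
  | zero =>
    intro D hD hsum
    have hle : ∀ x, D x ≤ 1 := fun x =>
      le_trans (Finset.single_le_sum (fun y _ => hD y) (Finset.mem_univ x)) hsum
    simp only [Finset.univ_eq_empty, Finset.sum_empty]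
    exact Finset.sum_nonneg fun x _ => Real.negMulLog_nonneg (hD x) (hle x)
  | succ n ih =>
    intro D hD hsum
    set D0 : (Fin n → Bool) → ℝ := fun y => D (Fin.cons false y) with hD0def
    set D1 : (Fin n → Bool) → ℝ := fun y => D (Fin.cons true y) with hD1def
    have hsplitD : ∑ x, D x = ∑ y, D0 y + ∑ y, D1 y := sum_cons D
    have hsumM : ∑ y, (D0 y + D1 y) ≤ 1 := by
      rw [Finset.sum_add_distrib]; rw [hsplitD] at hsum; exact hsum
    have hM0 : ∀ y, 0 ≤ D0 y + D1 y := fun y => add_nonneg (hD _) (hD _)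
    have ihM := ih (fun y => D0 y + D1 y) hM0 hsumM
    -- rewrite RHS
    have hRHS : ∑ x, Real.negMulLog (D x)
        = ∑ y, Real.negMulLog (D0 y) + ∑ y, Real.negMulLog (D1 y) :=
      sum_cons _
    -- term for i = 0
    have hterm0 : ∑ x, (Real.negMulLog (D x) - 2⁻¹ * Real.negMulLog (D x + D (flipBit 0 x)))
        = (∑ y, Real.negMulLog (D0 y) + ∑ y, Real.negMulLog (D1 y))
          - ∑ y, Real.negMulLog (D0 y + D1 y) := by
      rw [sum_cons (fun x => (Real.negMulLog (D x) - 2⁻¹ * Real.negMulLog (D x + D (flipBit 0 x))))]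
      simp only [flip_cons_zero, Bool.not_false, Bool.not_true]
      rw [Finset.sum_sub_distrib, Finset.sum_sub_distrib]
      have : ∀ y : Fin n → Bool, D (Fin.cons true y) + D (Fin.cons false y) = D0 y + D1 y := by
        intro y; rw [add_comm]
      simp only [this]
      have e0 : ∀ x, D (Fin.cons false x) = D0 x := fun _ => rfl
      have e1' : ∀ x, D (Fin.cons true x) = D1 x := fun _ => rfl
      simp only [e0, e1']
      rw [← Finset.mul_sum]
      ring
    -- terms for i.succ
    have htermsucc : ∀ i : Fin n,
        ∑ x, (Real.negMulLog (D x) - 2⁻¹ * Real.negMulLog (D x + D (flipBit i.succ x)))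
        = (∑ y, (Real.negMulLog (D0 y) - 2⁻¹ * Real.negMulLog (D0 y + D0 (flipBit i y))))
          + (∑ y, (Real.negMulLog (D1 y) - 2⁻¹ * Real.negMulLog (D1 y + D1 (flipBit i y)))) := by
      intro i
      rw [sum_cons (fun x => (Real.negMulLog (D x) - 2⁻¹ * Real.negMulLog (D x + D (flipBit i.succ x))))]
      simp only [flip_cons_succ]
      rfl
    -- key per-coordinate comparison
    have hkey : ∀ i : Fin n,
        (∑ y, (Real.negMulLog (D0 y) - 2⁻¹ * Real.negMulLog (D0 y + D0 (flipBit i y))))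
          + (∑ y, (Real.negMulLog (D1 y) - 2⁻¹ * Real.negMulLog (D1 y + D1 (flipBit i y))))
        ≤ ∑ y, (Real.negMulLog ((fun y => D0 y + D1 y) y)
            - 2⁻¹ * Real.negMulLog ((fun y => D0 y + D1 y) y
              + (fun y => D0 y + D1 y) (flipBit i y))) := by
      intro i
      have pair : ∀ y, kap (D0 y) (D1 y) + kap (D0 (flipBit i y)) (D1 (flipBit i y))
          ≤ kap (D0 y + D0 (flipBit i y)) (D1 y + D1 (flipBit i y)) :=
        fun y => kap_superadd (hD _) (hD _) (hD _) (hD _)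
      have hsumpair : ∑ y, kap (D0 (flipBit i y)) (D1 (flipBit i y))
          = ∑ y, kap (D0 y) (D1 y) := sum_flip i (fun y => kap (D0 y) (D1 y))
      have h2 : 2 * ∑ y, kap (D0 y) (D1 y)
          ≤ ∑ y, kap (D0 y + D0 (flipBit i y)) (D1 y + D1 (flipBit i y)) := by
        have := Finset.sum_le_sum (fun y (_ : y ∈ Finset.univ) => pair y)
        rw [Finset.sum_add_distrib, hsumpair] at this
        linarith [this]
      -- expand kap and conclude
      simp only [kap] at h2 ⊢
      have e1 : ∑ y, Real.negMulLog (D0 (flipBit i y)) = ∑ y, Real.negMulLog (D0 y) :=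
        sum_flip i (fun y => Real.negMulLog (D0 y))
      have e2 : ∑ y, Real.negMulLog (D1 (flipBit i y)) = ∑ y, Real.negMulLog (D1 y) :=
        sum_flip i (fun y => Real.negMulLog (D1 y))
      simp only [Finset.sum_sub_distrib, Finset.sum_add_distrib] at h2 ⊢
      rw [← Finset.mul_sum, ← Finset.mul_sum, ← Finset.mul_sum]
      have harr : ∀ y, D0 y + D0 (flipBit i y) + (D1 y + D1 (flipBit i y))
          = (D0 y + D1 y) + (D0 (flipBit i y) + D1 (flipBit i y)) := fun y => by ring
      simp only [harr] at h2
      linarith [h2]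
    -- assemble
    rw [Fin.sum_univ_succ, hterm0, hRHS]
    have : ∑ i : Fin n, ∑ x,
        (Real.negMulLog (D x) - 2⁻¹ * Real.negMulLog (D x + D (flipBit i.succ x)))
        ≤ ∑ y, Real.negMulLog (D0 y + D1 y) := by
      calc ∑ i : Fin n, ∑ x, (Real.negMulLog (D x) - 2⁻¹ * Real.negMulLog (D x + D (flipBit i.succ x)))
          ≤ ∑ i : Fin n, ∑ y, (Real.negMulLog ((fun y => D0 y + D1 y) y)
              - 2⁻¹ * Real.negMulLog ((fun y => D0 y + D1 y) y + (fun y => D0 y + D1 y) (flipBit i y))) := by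
            apply Finset.sum_le_sum
            intro i _
            rw [htermsucc i]
            exact hkey i
        _ ≤ ∑ y, Real.negMulLog (D0 y + D1 y) := ihM
    linarith [this]



lemma log_ratio_lb {q : ℝ} (hq0 : 0 < q) (hq2 : q ≤ 1/2) :
    2 * (1 - 2*q) ≤ Real.log (1 - q) - Real.log q := by
  set G : ℝ → ℝ := fun x => Real.log (1 - x) - Real.log x + 4*x with hG
  have hanti : AntitoneOn G (Set.Icc q (1/2)) := by
    have hconv : Convex ℝ (Set.Icc q (1/2:ℝ)) := convex_Icc _ _
    have hder : ∀ x ∈ interior (Set.Icc q (1/2:ℝ)),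
        HasDerivAt G (-(1/(1-x)) - 1/x + 4) x := by
      intro x hx
      rw [interior_Icc] at hx
      have hx0 : 0 < x := lt_trans hq0 hx.1
      have hx1 : x < 1 := by have := hx.2; linarith
      have h1 : HasDerivAt (fun y : ℝ => Real.log (1 - y)) (-(1/(1-x))) x := by
        have hinner : HasDerivAt (fun y : ℝ => 1 - y) (-1) x := by
          simpa using (hasDerivAt_id x).const_sub 1
        have := (Real.hasDerivAt_log (by linarith : (1:ℝ) - x ≠ 0)).comp x hinner
        simpa [div_eq_mul_inv, mul_comm, Function.comp_def] using this
      have h2 : HasDerivAt (fun y : ℝ => Real.log y) (1/x) x := by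
        simpa [one_div] using Real.hasDerivAt_log (ne_of_gt hx0)
      have h3 : HasDerivAt (fun y : ℝ => (4:ℝ)*y) 4 x := by
        simpa using (hasDerivAt_id x).const_mul (4:ℝ)
      exact (h1.sub h2).add h3
    apply antitoneOn_of_deriv_nonpos hconv
    · apply ContinuousOn.add
      apply ContinuousOn.sub
      · apply ContinuousOn.log (by fun_prop)
        intro x hx; have := hx.2; have := hx.1
        simp only [Set.mem_Icc] at *; intro h; linarith [hx.1, hx.2]
      · apply ContinuousOn.log (by fun_prop)
        intro x hx; simp only [Set.mem_Icc] at hx; intro h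
        exact absurd h (ne_of_gt (lt_of_lt_of_le hq0 hx.1))
      · fun_prop
    · intro x hx
      rw [interior_Icc] at hx ⊢
      have hx0 : 0 < x := lt_trans hq0 hx.1
      have hx2 : x < 1/2 := hx.2
      exact ((hder x (by rw [interior_Icc]; exact hx)).differentiableAt).differentiableWithinAt
    · intro x hx
      rw [interior_Icc] at hx
      rw [(hder x (by rw [interior_Icc]; exact hx)).deriv]
      have hx0 : 0 < x := lt_trans hq0 hx.1
      have hx1 : x < 1 := by linarith [hx.2]
      have key : 4 * (x * (1-x)) ≤ 1 := by nlinarith [sq_nonneg (1 - 2*x)]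
      have h1x : 0 < 1 - x := by linarith
      have : 1/(1-x) + 1/x ≥ 4 := by
        rw [div_add_div _ _ (ne_of_gt h1x) (ne_of_gt hx0)]
        rw [ge_iff_le, le_div_iff₀ (by positivity)]
        nlinarith
      linarith
  rcases eq_or_lt_of_le hq2 with rfl | hlt
  · norm_num
  · have := hanti (Set.mem_Icc.mpr ⟨le_refl q, hq2⟩) (Set.mem_Icc.mpr ⟨hq2, le_refl _⟩) hq2
    have hGhalf : G (1/2) = 2 := by
      norm_num [hG]
    rw [hGhalf] at this
    simp only [hG] at this
    linarith

noncomputable def rban (q : ℝ) : ℝ :=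
  (1 - 2*q) / (Real.sqrt (q*(1-q)) * (Real.log (1-q) - Real.log q))

lemma den_pos {q : ℝ} (hq0 : 0 < q) (hq2 : q < 1/2) :
    0 < Real.sqrt (q*(1-q)) * (Real.log (1-q) - Real.log q) := by
  have h1 : 0 < q*(1-q) := by nlinarith
  have h2 : Real.log q < Real.log (1-q) := Real.log_lt_log hq0 (by linarith)
  have := Real.sqrt_pos.mpr h1
  nlinarith

lemma sqrtmul_hasDeriv {q : ℝ} (hq0 : 0 < q) (hq1 : q < 1) :
    HasDerivAt (fun y : ℝ => Real.sqrt (y*(1-y)))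
      ((1 - 2*q) / (2 * Real.sqrt (q*(1-q)))) q := by
  have hpos : 0 < q*(1-q) := by nlinarith
  have hinner : HasDerivAt (fun y : ℝ => y*(1-y)) (1 - 2*q) q := by
    have : HasDerivAt (fun y : ℝ => y - y^2) (1 - 2*q) q := by
      simpa [Pi.sub_def] using (hasDerivAt_id q).sub ((hasDerivAt_pow 2 q))
    have he : (fun y : ℝ => y*(1-y)) = fun y : ℝ => y - y^2 := by funext y; ring
    rw [he]; exact this
  exact hinner.sqrt (ne_of_gt hpos)

lemma L_hasDeriv {q : ℝ} (hq0 : 0 < q) (hq1 : q < 1) :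
    HasDerivAt (fun y : ℝ => Real.log (1-y) - Real.log y) (-(1/(q*(1-q)))) q := by
  have h1 : HasDerivAt (fun y : ℝ => Real.log (1 - y)) (-(1/(1-q))) q := by
    have hinner : HasDerivAt (fun y : ℝ => 1 - y) (-1) q := by
      simpa using (hasDerivAt_id q).const_sub 1
    have := (Real.hasDerivAt_log (by linarith : (1:ℝ) - q ≠ 0)).comp q hinner
    simpa [div_eq_mul_inv, mul_comm, Function.comp_def] using this
  have h2 : HasDerivAt (fun y : ℝ => Real.log y) (1/q) q := by
    simpa [one_div] using Real.hasDerivAt_log (ne_of_gt hq0)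
  have := h1.sub h2
  have he : -(1/(1-q)) - 1/q = -(1/(q*(1-q))) := by
    have h1 : (1:ℝ) - q ≠ 0 := by linarith
    have h2 : q ≠ 0 := ne_of_gt hq0
    field_simp
    ring
  rw [he] at this; exact this

lemma rban_hasDeriv {q : ℝ} (hq0 : 0 < q) (hq2 : q < 1/2) :
    HasDerivAt rban
      ((-2 * (Real.sqrt (q*(1-q)) * (Real.log (1-q) - Real.log q))
        - (1 - 2*q) * ((1 - 2*q) / (2 * Real.sqrt (q*(1-q))) * (Real.log (1-q) - Real.log q)
            + Real.sqrt (q*(1-q)) * (-(1/(q*(1-q))))))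
       / (Real.sqrt (q*(1-q)) * (Real.log (1-q) - Real.log q))^2) q := by
  have hq1 : q < 1 := by linarith
  have hnum : HasDerivAt (fun y : ℝ => 1 - 2*y) (-2) q := by
    simpa using ((hasDerivAt_id q).const_mul (2:ℝ)).const_sub 1
  have hden : HasDerivAt (fun y : ℝ => Real.sqrt (y*(1-y)) * (Real.log (1-y) - Real.log y))
      ((1 - 2*q) / (2 * Real.sqrt (q*(1-q))) * (Real.log (1-q) - Real.log q)
        + Real.sqrt (q*(1-q)) * (-(1/(q*(1-q))))) q :=
    (sqrtmul_hasDeriv hq0 hq1).mul (L_hasDeriv hq0 hq1)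
  exact hnum.div hden (ne_of_gt (den_pos hq0 hq2))

lemma rban_antitone : AntitoneOn rban (Set.Ioo 0 (1/2:ℝ)) := by
  apply antitoneOn_of_deriv_nonpos (convex_Ioo _ _)
  · intro x hx
    exact ((rban_hasDeriv hx.1 hx.2).differentiableAt).continuousAt.continuousWithinAt
  · rw [interior_Ioo]
    intro x hx
    exact ((rban_hasDeriv hx.1 hx.2).differentiableAt).differentiableWithinAt
  · rw [interior_Ioo]
    intro q hq
    rw [(rban_hasDeriv hq.1 hq.2).deriv]
    have hq0 := hq.1
    have hq2 := hq.2
    have hq1 : q < 1 := by linarith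
    set s := Real.sqrt (q*(1-q)) with hs
    set L := Real.log (1-q) - Real.log q with hL
    have hspos : 0 < s := Real.sqrt_pos.mpr (by nlinarith)
    have hs2 : s^2 = q*(1-q) := Real.sq_sqrt (by nlinarith)
    have hLpos : 0 < L := by
      have := Real.log_lt_log hq0 (by linarith : q < 1-q)
      simp only [hL]; linarith
    have hLlb : 2*(1-2*q) ≤ L := log_ratio_lb hq0 (le_of_lt hq2)
    apply div_nonpos_of_nonpos_of_nonneg _ (sq_nonneg _)
    -- numerator ≤ 0
    have hsne : s ≠ 0 := ne_of_gt hspos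
    have h1 : s * (-(1/(q*(1-q)))) = -(1/s) := by
      rw [← hs2]; field_simp
    have hrw : -2 * (s * L) - (1 - 2*q) * ((1 - 2*q) / (2*s) * L + s * (-(1/(q*(1-q)))))
        = ((1-2*q) - L/2) / s := by
      rw [h1]
      have h2 : -2 * (s * L) - (1 - 2*q) * ((1 - 2*q) / (2*s) * L + (-(1/s)))
          = (-2*s^2*L - (1-2*q)^2*L/2 + (1-2*q))/s := by
        field_simp; ring
      rw [h2, hs2]
      congr 1
      ring
    rw [hrw]
    apply div_nonpos_of_nonpos_of_nonneg _ hspos.le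
    linarith

noncomputable def Phi (t q : ℝ) : ℝ := 2 * Real.sqrt (q*(1-q)) - t * Real.binEntropy q

lemma Phi_hasDeriv {t q : ℝ} (hq0 : 0 < q) (hq1 : q < 1) :
    HasDerivAt (Phi t) ((1 - 2*q)/Real.sqrt (q*(1-q))
      - t * (Real.log (1-q) - Real.log q)) q := by
  have h1 := (sqrtmul_hasDeriv hq0 hq1).const_mul (2:ℝ)
  have h2 := (Real.hasDerivAt_binEntropy (ne_of_gt hq0) (ne_of_lt hq1)).const_mul t
  have := h1.sub h2
  have hspos : 0 < Real.sqrt (q*(1-q)) := Real.sqrt_pos.mpr (by nlinarith)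
  have he : 2 * ((1 - 2*q) / (2 * Real.sqrt (q*(1-q))))
      = (1 - 2*q)/Real.sqrt (q*(1-q)) := by
    field_simp
  rw [he] at this
  exact this

lemma Phi_continuous (t : ℝ) : Continuous (Phi t) := by
  unfold Phi
  fun_prop

lemma Phi_symm (t q : ℝ) : Phi t (1-q) = Phi t q := by
  unfold Phi
  rw [Real.binEntropy_one_sub]
  congr 2
  ring

lemma Phi_le_of_mem {p : ℝ} (hp0 : 0 < p) (hp2 : p < 1/2) :
    ∀ q ∈ Set.Icc (0:ℝ) (1/2), Phi (rban p) q ≤ Phi (rban p) p := by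
  intro q hq
  set t := rban p with ht
  have hpI : p ∈ Set.Ioo (0:ℝ) (1/2) := ⟨hp0, hp2⟩
  -- monotone on [0,p]
  have hmono : MonotoneOn (Phi t) (Set.Icc 0 p) := by
    apply monotoneOn_of_deriv_nonneg (convex_Icc _ _) (Phi_continuous t).continuousOn
    · rw [interior_Icc]
      intro x hx
      exact ((Phi_hasDeriv hx.1 (by linarith [hx.2] : x < 1)).differentiableAt).differentiableWithinAt
    · rw [interior_Icc]
      intro x hx
      have hx1 : x < 1 := by linarith [hx.2]
      rw [(Phi_hasDeriv hx.1 hx1).deriv]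
      have hxI : x ∈ Set.Ioo (0:ℝ) (1/2) := ⟨hx.1, by linarith [hx.2]⟩
      have hr : t ≤ rban x := rban_antitone hxI hpI (le_of_lt hx.2)
      have hspos : 0 < Real.sqrt (x*(1-x)) := Real.sqrt_pos.mpr (by nlinarith [hxI.1, hxI.2])
      have hLpos : 0 < Real.log (1-x) - Real.log x := by
        have := Real.log_lt_log hx.1 (by linarith [hxI.2] : x < 1-x)
        linarith
      have hd : 0 < Real.sqrt (x*(1-x)) * (Real.log (1-x) - Real.log x) := by positivity
      have hLne : Real.log (1-x) - Real.log x ≠ 0 := ne_of_gt hLpos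
      have hsne : Real.sqrt (x*(1-x)) ≠ 0 := ne_of_gt hspos
      have hre : (1 - 2*x)/Real.sqrt (x*(1-x)) = rban x * (Real.log (1-x) - Real.log x) := by
        unfold rban
        rw [div_mul_eq_mul_div, mul_comm (Real.sqrt (x*(1-x))) (Real.log (1-x) - Real.log x),
          ← div_div, mul_comm (1-2*x) (Real.log (1-x) - Real.log x), mul_div_assoc,
          mul_comm (Real.log (1-x) - Real.log x) ((1-2*x)/(Real.log (1-x) - Real.log x)),
          div_mul_cancel₀ _ hLne]
      rw [hre]
      have := mul_le_mul_of_nonneg_right hr hLpos.le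
      linarith
  -- antitone on [p, 1/2]
  have hanti : AntitoneOn (Phi t) (Set.Icc p (1/2)) := by
    apply antitoneOn_of_deriv_nonpos (convex_Icc _ _) (Phi_continuous t).continuousOn
    · rw [interior_Icc]
      intro x hx
      exact ((Phi_hasDeriv (by linarith [hx.1] : 0 < x) (by linarith [hx.2] : x < 1)).differentiableAt).differentiableWithinAt
    · rw [interior_Icc]
      intro x hx
      have hx0 : 0 < x := by linarith [hx.1]
      have hx2 : x < 1/2 := hx.2
      have hx1 : x < 1 := by linarith
      rw [(Phi_hasDeriv hx0 hx1).deriv]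
      have hxI : x ∈ Set.Ioo (0:ℝ) (1/2) := ⟨hx0, hx2⟩
      have hr : rban x ≤ t := rban_antitone hpI hxI (le_of_lt hx.1)
      have hspos : 0 < Real.sqrt (x*(1-x)) := Real.sqrt_pos.mpr (by nlinarith)
      have hLpos : 0 < Real.log (1-x) - Real.log x := by
        have := Real.log_lt_log hx0 (by linarith : x < 1-x)
        linarith
      have hLne : Real.log (1-x) - Real.log x ≠ 0 := ne_of_gt hLpos
      have hLne : Real.log (1-x) - Real.log x ≠ 0 := ne_of_gt hLpos
      have hsne : Real.sqrt (x*(1-x)) ≠ 0 := ne_of_gt hspos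
      have hre : (1 - 2*x)/Real.sqrt (x*(1-x)) = rban x * (Real.log (1-x) - Real.log x) := by
        unfold rban
        rw [div_mul_eq_mul_div, mul_comm (Real.sqrt (x*(1-x))) (Real.log (1-x) - Real.log x),
          ← div_div, mul_comm (1-2*x) (Real.log (1-x) - Real.log x), mul_div_assoc,
          mul_comm (Real.log (1-x) - Real.log x) ((1-2*x)/(Real.log (1-x) - Real.log x)),
          div_mul_cancel₀ _ hLne]
      rw [hre]
      have := mul_le_mul_of_nonneg_right hr hLpos.le
      linarith
  rcases le_total q p with h | h
  · exact hmono ⟨hq.1, h⟩ ⟨hp0.le, le_refl p⟩ h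
  · exact hanti ⟨le_refl p, hp2.le⟩ ⟨h, hq.2⟩ h

lemma tangent (p : ℝ) (hp0 : 0 < p) (hp2 : p ≤ 1/2) :
    ∃ t : ℝ, 0 ≤ t ∧ ∀ q ∈ Set.Icc (0:ℝ) 1,
      2*Real.sqrt (q*(1-q)) ≤ 2*Real.sqrt (p*(1-p)) + t*(Real.binEntropy q - Real.binEntropy p) := by
  rcases eq_or_lt_of_le hp2 with rfl | hlt
  · refine ⟨0, le_refl 0, fun q hq => ?_⟩
    have h1 : q*(1-q) ≤ (1/2)*(1-1/2) := by nlinarith [hq.1, hq.2, sq_nonneg (1-2*q)]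
    have := Real.sqrt_le_sqrt h1
    simp only [zero_mul, add_zero]
    linarith
  · refine ⟨rban p, ?_, ?_⟩
    · unfold rban
      apply div_nonneg (by linarith)
      exact (den_pos hp0 hlt).le
    · intro q hq
      have key : Phi (rban p) q ≤ Phi (rban p) p := by
        rcases le_total q (1/2) with h | h
        · exact Phi_le_of_mem hp0 hlt q ⟨hq.1, h⟩
        · rw [← Phi_symm]
          exact Phi_le_of_mem hp0 hlt (1-q) ⟨by linarith [hq.2], by linarith⟩
      unfold Phi at key
      linarith




lemma kap_homog (c x y : ℝ) : kap (c*x) (c*y) = c * kap x y := by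
  unfold kap
  rw [show c*x + c*y = c*(x+y) by ring]
  rw [Real.negMulLog_mul, Real.negMulLog_mul, Real.negMulLog_mul]
  ring

lemma kap_binEnt (q : ℝ) : kap (1-q) q = Real.binEntropy q := by
  unfold kap
  rw [show (1-q) + q = 1 by ring]
  rw [Real.binEntropy_eq_negMulLog_add_negMulLog_one_sub]
  simp [add_comm]

lemma two_point {t lam : ℝ}
    (htan : ∀ q ∈ Set.Icc (0:ℝ) 1, 2*Real.sqrt (q*(1-q)) ≤ lam + t * Real.binEntropy q)
    {a b : ℝ} (ha : 0 ≤ a) (hb : 0 ≤ b) :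
    2*(a*b) ≤ lam * (a^2+b^2) + t * kap (a^2) (b^2) := by
  rcases eq_or_lt_of_le (by positivity : (0:ℝ) ≤ a^2 + b^2) with hs | hs
  · have ha0 : a = 0 := by nlinarith
    have hb0 : b = 0 := by nlinarith
    simp [ha0, hb0, kap]
  · set s := a^2 + b^2 with hsdef
    set q := b^2 / s with hqdef
    have hq01 : q ∈ Set.Icc (0:ℝ) 1 := by
      constructor
      · positivity
      · rw [hqdef, div_le_one hs]; nlinarith [sq_nonneg a]
    have h1q : 1 - q = a^2 / s := by
      rw [hqdef]; field_simp; linarith [hsdef]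
    have hkey := htan q hq01
    have hsq : Real.sqrt (q*(1-q)) = a*b/s := by
      rw [h1q, hqdef]
      rw [show b^2/s * (a^2/s) = (a*b/s)^2 by ring]
      exact Real.sqrt_sq (by positivity)
    rw [hsq] at hkey
    have hmul := mul_le_mul_of_nonneg_left hkey hs.le
    have e1 : s * (2*(a*b/s)) = 2*(a*b) := by field_simp
    have e2 : s * Real.binEntropy q = kap (a^2) (b^2) := by
      rw [← kap_binEnt q, ← kap_homog]
      congr 1
      · rw [h1q]; field_simp
      · rw [hqdef]; field_simp
    rw [e1] at hmul
    calc 2*(a*b) ≤ s * (lam + t * Real.binEntropy q) := hmul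
      _ = lam * s + t * (s * Real.binEntropy q) := by ring
      _ = lam * (a^2+b^2) + t * kap (a^2) (b^2) := by rw [e2]

lemma energy_entropy {N : ℕ} (u : (Fin N → Bool) → ℝ) (hu : ∀ x, 0 ≤ u x)
    (hnorm : ∑ x, (u x)^2 = 1) (p : ℝ) (hp0 : 0 < p) (hp2 : p ≤ 1/2)
    (hent : ∑ x, Real.negMulLog ((u x)^2) ≤ N * Real.binEntropy p) :
    ∑ i, ∑ x, u x * u (flipBit i x) ≤ 2 * N * Real.sqrt (p*(1-p)) := by
  obtain ⟨t, ht0, htan⟩ := tangent p hp0 hp2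
  set lam := 2*Real.sqrt (p*(1-p)) - t * Real.binEntropy p with hlam
  have htan' : ∀ q ∈ Set.Icc (0:ℝ) 1,
      2*Real.sqrt (q*(1-q)) ≤ lam + t * Real.binEntropy q := by
    intro q hq
    have := htan q hq
    rw [hlam]; linarith
  have hperi : ∀ i : Fin N, ∑ x, u x * u (flipBit i x)
      ≤ lam + t * ∑ x, (Real.negMulLog ((u x)^2)
          - 2⁻¹ * Real.negMulLog ((u x)^2 + (u (flipBit i x))^2)) := by
    intro i
    have hdouble : ∀ x, 2*(u x * u (flipBit i x))
        ≤ lam * ((u x)^2 + (u (flipBit i x))^2)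
          + t * kap ((u x)^2) ((u (flipBit i x))^2) :=
      fun x => two_point htan' (hu x) (hu (flipBit i x))
    have hsum := Finset.sum_le_sum (fun x (_ : x ∈ Finset.univ) => hdouble x)
    -- LHS sum
    have hL : ∑ x, 2*(u x * u (flipBit i x)) = 2 * ∑ x, u x * u (flipBit i x) := by
      rw [Finset.mul_sum]
    -- RHS sums
    have hR1 : ∑ x, (u (flipBit i x))^2 = ∑ x, (u x)^2 :=
      sum_flip i (fun x => (u x)^2)
    have hR2 : ∑ x, Real.negMulLog ((u (flipBit i x))^2)
        = ∑ x, Real.negMulLog ((u x)^2) :=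
      sum_flip i (fun x => Real.negMulLog ((u x)^2))
    have hexp : ∑ x, (lam * ((u x)^2 + (u (flipBit i x))^2)
          + t * kap ((u x)^2) ((u (flipBit i x))^2))
        = 2 * lam + t * (2 * ∑ x, (Real.negMulLog ((u x)^2)
            - 2⁻¹ * Real.negMulLog ((u x)^2 + (u (flipBit i x))^2))) := by
      unfold kap
      simp only [Finset.sum_add_distrib, Finset.sum_sub_distrib, ← Finset.mul_sum]
      rw [hR1, hR2, hnorm]
      ring
    rw [hL, hexp] at hsum
    linarith
  calc ∑ i, ∑ x, u x * u (flipBit i x)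
      ≤ ∑ i : Fin N, (lam + t * ∑ x, (Real.negMulLog ((u x)^2)
          - 2⁻¹ * Real.negMulLog ((u x)^2 + (u (flipBit i x))^2))) :=
        Finset.sum_le_sum (fun i _ => hperi i)
    _ = N * lam + t * ∑ i, ∑ x, (Real.negMulLog ((u x)^2)
          - 2⁻¹ * Real.negMulLog ((u x)^2 + (u (flipBit i x))^2)) := by
        rw [Finset.sum_add_distrib, Finset.sum_const, Finset.card_univ, ← Finset.mul_sum]
        simp [Fintype.card_fin, nsmul_eq_mul]
    _ ≤ N * lam + t * ∑ x, Real.negMulLog ((u x)^2) := by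
        have hhan := han N (fun x => (u x)^2) (fun x => sq_nonneg _) (le_of_eq hnorm)
        have := mul_le_mul_of_nonneg_left hhan ht0
        linarith
    _ ≤ N * lam + t * (N * Real.binEntropy p) := by
        have := mul_le_mul_of_nonneg_left hent ht0
        linarith
    _ = 2 * N * Real.sqrt (p*(1-p)) := by rw [hlam]; ring


/-- For unit vectors `f` (supported on even Hamming weight) and `g` (supported on
odd Hamming weight) with measurement entropies `S_f`, `S_g`, every `p ∈ [0,1/2]` with
`N·H(p) ≥ (S_f + S_g)/2 + 1` satisfies `Re ⟨g, Xf⟩ ≤ 2N√(p(1−p))`. -/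
theorem transverse_field_cross_entropy_bound
    (N : ℕ) (hN : 2 ≤ N)
    (f g : (Fin N → Bool) → ℂ)
    (hfnorm : ∑ x, ‖f x‖ ^ 2 = 1)
    (hgnorm : ∑ x, ‖g x‖ ^ 2 = 1)
    (hfsupp : ∀ x, ¬ Even (hammingWt x) → f x = 0)
    (hgsupp : ∀ x, Even (hammingWt x) → g x = 0)
    (p : ℝ) (hp0 : 0 ≤ p) (hp2 : p ≤ 1 / 2)
    (hent : ((-∑ x, ‖f x‖ ^ 2 * Real.logb 2 (‖f x‖ ^ 2))
        + (-∑ x, ‖g x‖ ^ 2 * Real.logb 2 (‖g x‖ ^ 2))) / 2 + 1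
      ≤ N * binEnt p) :
    (∑ x, (starRingEnd ℂ) (g x) * transX f x).re ≤ 2 * N * Real.sqrt (p * (1 - p)) := by
  classical
  set a : (Fin N → Bool) → ℝ := fun x => ‖f x‖ with hadef
  set b : (Fin N → Bool) → ℝ := fun x => ‖g x‖ with hbdef
  have ha0 : ∀ x, 0 ≤ a x := fun x => norm_nonneg _
  have hb0 : ∀ x, 0 ≤ b x := fun x => norm_nonneg _
  have hab : ∀ x, a x = 0 ∨ b x = 0 := by
    intro x
    by_cases h : Even (hammingWt x)
    · right; rw [hbdef]; simp [hgsupp x h]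
    · left; rw [hadef]; simp [hfsupp x h]
  set u : (Fin N → Bool) → ℝ := fun x => (a x + b x) / Real.sqrt 2 with hudef
  have h2 : Real.sqrt 2 * Real.sqrt 2 = 2 := Real.mul_self_sqrt (by norm_num)
  have hu0 : ∀ x, 0 ≤ u x := fun x => by
    have := ha0 x; have := hb0 x
    rw [hudef]; positivity
  have husq : ∀ x, (u x)^2 = (a x^2 + b x^2)/2 := by
    intro x
    rw [hudef]
    simp only
    rw [div_pow, sq (Real.sqrt 2), h2]
    rcases hab x with h | h <;> rw [h] <;> ring
  have hlog2 : (0:ℝ) < Real.log 2 := Real.log_pos (by norm_num)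
  -- norms
  have hunorm : ∑ x, (u x)^2 = 1 := by
    simp only [husq]
    rw [← Finset.sum_div, Finset.sum_add_distrib, hfnorm, hgnorm]
    norm_num
  -- entropy bound for u²
  have hentN : ∑ x, Real.negMulLog ((u x)^2) ≤ N * Real.binEntropy p := by
    -- pointwise split
    have hpt : ∀ x, Real.negMulLog ((u x)^2)
        = 2⁻¹ * Real.negMulLog (a x^2) + a x^2 * Real.negMulLog 2⁻¹
          + (2⁻¹ * Real.negMulLog (b x^2) + b x^2 * Real.negMulLog 2⁻¹) := by
      intro x
      rcases hab x with h | h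
      · rw [husq, h]
        rw [show ((0:ℝ)^2 + b x^2)/2 = 2⁻¹ * b x^2 by ring]
        rw [Real.negMulLog_mul]
        simp
        try ring
      · rw [husq, h]
        rw [show (a x^2 + (0:ℝ)^2)/2 = 2⁻¹ * a x^2 by ring]
        rw [Real.negMulLog_mul]
        simp
        try ring
    have hml : Real.negMulLog (2⁻¹:ℝ) = 2⁻¹ * Real.log 2 := by
      unfold Real.negMulLog
      rw [Real.log_inv]
      ring
    have hsum : ∑ x, Real.negMulLog ((u x)^2)
        = 2⁻¹ * (∑ x, Real.negMulLog (a x^2)) + 2⁻¹ * (∑ x, Real.negMulLog (b x^2))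
          + Real.log 2 := by
      simp only [hpt]
      rw [Finset.sum_add_distrib, Finset.sum_add_distrib, Finset.sum_add_distrib,
        ← Finset.mul_sum, ← Finset.mul_sum, ← Finset.sum_mul, ← Finset.sum_mul,
        hfnorm, hgnorm, hml]
      ring
    -- convert hypothesis from bits to nats
    have hSf : (-∑ x, a x^2 * Real.logb 2 (a x^2))
        = (∑ x, Real.negMulLog (a x^2)) / Real.log 2 := by
      rw [Finset.sum_div, ← Finset.sum_neg_distrib]
      congr 1
      funext x
      rw [Real.logb, Real.negMulLog]
      field_simp
      try ring
    have hSg : (-∑ x, b x^2 * Real.logb 2 (b x^2))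
        = (∑ x, Real.negMulLog (b x^2)) / Real.log 2 := by
      rw [Finset.sum_div, ← Finset.sum_neg_distrib]
      congr 1
      funext x
      rw [Real.logb, Real.negMulLog]
      field_simp
      try ring
    have hbe : binEnt p = Real.binEntropy p / Real.log 2 := by
      unfold binEnt Real.binEntropy Real.logb
      rw [Real.log_inv, Real.log_inv]
      field_simp
      ring
    rw [hSf, hSg, hbe] at hent
    rw [hsum]
    set A := ∑ x, Real.negMulLog (a x^2) with hA
    set B := ∑ x, Real.negMulLog (b x^2) with hB
    have key := mul_le_mul_of_nonneg_right hent hlog2.le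
    have e1 : ((A/Real.log 2 + B/Real.log 2)/2 + 1) * Real.log 2
        = 2⁻¹*A + 2⁻¹*B + Real.log 2 := by
      field_simp
    have e2 : ((N:ℝ)*(Real.binEntropy p/Real.log 2))*Real.log 2 = N*Real.binEntropy p := by
      field_simp
    rw [e1, e2] at key
    linarith
  -- positivity of p
  have hppos : 0 < p := by
    rcases eq_or_lt_of_le hp0 with rfl | h
    · exfalso
      have hbe0 : binEnt 0 = 0 := by
        unfold binEnt
        simp
      rw [hbe0, mul_zero] at hent
      -- each entropy term is nonneg
      have hfle : ∀ x, a x^2 ≤ 1 := by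
        intro x
        calc a x^2 ≤ ∑ y, a y^2 :=
          Finset.single_le_sum (fun y _ => sq_nonneg (a y)) (Finset.mem_univ x)
        _ = 1 := hfnorm
      have hgle : ∀ x, b x^2 ≤ 1 := by
        intro x
        calc b x^2 ≤ ∑ y, b y^2 :=
          Finset.single_le_sum (fun y _ => sq_nonneg (b y)) (Finset.mem_univ x)
        _ = 1 := hgnorm
      have hSf0 : 0 ≤ -∑ x, a x^2 * Real.logb 2 (a x^2) := by
        rw [← Finset.sum_neg_distrib]
        apply Finset.sum_nonneg
        intro x _
        rw [neg_nonneg]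
        apply mul_nonpos_of_nonneg_of_nonpos (sq_nonneg _)
        exact Real.logb_nonpos (by norm_num) (sq_nonneg _) (hfle x)
      have hSg0 : 0 ≤ -∑ x, b x^2 * Real.logb 2 (b x^2) := by
        rw [← Finset.sum_neg_distrib]
        apply Finset.sum_nonneg
        intro x _
        rw [neg_nonneg]
        apply mul_nonpos_of_nonneg_of_nonpos (sq_nonneg _)
        exact Real.logb_nonpos (by norm_num) (sq_nonneg _) (hgle x)
      linarith
    · exact h
  -- step 1 : real part bound
  have hstep1 : (∑ x, (starRingEnd ℂ) (g x) * transX f x).re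
      ≤ ∑ i, ∑ x, b x * a (flipBit i x) := by
    rw [Finset.sum_comm]
    rw [Complex.re_sum]
    apply Finset.sum_le_sum
    intro x _
    unfold transX
    rw [Finset.mul_sum, Complex.re_sum]
    apply Finset.sum_le_sum
    intro i _
    calc ((starRingEnd ℂ) (g x) * f (flipBit i x)).re
        ≤ ‖(starRingEnd ℂ) (g x) * f (flipBit i x)‖ := Complex.re_le_norm _
      _ = b x * a (flipBit i x) := by
          rw [norm_mul, Complex.norm_conj]
  -- step 2 : cross term dominated by u-energy
  have hstep2 : ∀ i, ∑ x, b x * a (flipBit i x) ≤ ∑ x, u x * u (flipBit i x) := by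
    intro i
    have hinv : ∀ x, flipBit i (flipBit i x) = x := flipBit_invol i
    have hswap : ∑ x, a x * b (flipBit i x) = ∑ x, a (flipBit i x) * b x := by
      have := sum_flip i (fun x => a (flipBit i x) * b x)
      simp only [hinv] at this
      exact this
    have hpt : ∀ x, u x * u (flipBit i x)
        = (a x * a (flipBit i x) + a x * b (flipBit i x) + b x * a (flipBit i x)
            + b x * b (flipBit i x))/2 := by
      intro x
      rw [hudef]
      simp only
      rw [div_mul_div_comm, h2]
      ring
    simp only [hpt]
    rw [← Finset.sum_div]
    have haa : 0 ≤ ∑ x, (a x * a (flipBit i x)) :=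
      Finset.sum_nonneg fun x _ => mul_nonneg (ha0 x) (ha0 _)
    have hbb : 0 ≤ ∑ x, (b x * b (flipBit i x)) :=
      Finset.sum_nonneg fun x _ => mul_nonneg (hb0 x) (hb0 _)
    rw [Finset.sum_add_distrib, Finset.sum_add_distrib, Finset.sum_add_distrib]
    have hba : ∑ x, b x * a (flipBit i x) = ∑ x, a (flipBit i x) * b x := by
      congr 1; funext x; ring
    have h4 : ∑ x, a x * b (flipBit i x) = ∑ x, b x * a (flipBit i x) := by
      rw [hswap, ← hba]
    rw [h4]
    rw [hba] at h4
    linarith [haa, hbb]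
  calc (∑ x, (starRingEnd ℂ) (g x) * transX f x).re
      ≤ ∑ i, ∑ x, b x * a (flipBit i x) := hstep1
    _ ≤ ∑ i, ∑ x, u x * u (flipBit i x) :=
        Finset.sum_le_sum fun i _ => hstep2 i
    _ ≤ 2 * N * Real.sqrt (p * (1-p)) :=
        energy_entropy u hu0 hunorm p hppos hp2 hentN

end AuxProof
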